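/- (Sufficiency in Theorem 1(i)) Suppose that for every u ∈ S^d the family (x̄_i)_{i ∈ I_u} spans ℝ^{d+1}, where I_u = {i : y_i⟨x̄_i,u⟩ ≤ 0}. Then m := inf_{θ} λ_min(H(θ)) > 0, where H(θ) = ∑_{i=1}^n ψ(y_i⟨x̄_i,θ⟩) x̄_i x̄_i^⊤. In particular the probit negative log-likelihood is strongly convex. -/

import Mathlib

open MeasureTheory Filter

noncomputable def phi (z : ℝ) : ℝ := (Real.sqrt (2 * Real.pi))⁻¹ * Real.exp (-z ^ 2 / 2)
noncomputable def Phi (z : ℝ) : ℝ := ∫ t in Set.Iic z, phi t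
noncomputable def psi (z : ℝ) : ℝ := (phi z / Phi z) * (z + phi z / Phi z)

lemma phi_pos (z : ℝ) : 0 < phi z := by unfold phi; positivity
lemma phi_cont : Continuous phi := by unfold phi; fun_prop
lemma phi_integrable : Integrable phi := by
  have h : Integrable (fun x : ℝ => Real.exp (-(1/2) * x ^ 2)) := integrable_exp_neg_mul_sq (by norm_num)
  have : phi = fun x => (Real.sqrt (2 * Real.pi))⁻¹ * Real.exp (-(1/2) * x ^ 2) := by
    funext x; unfold phi; ring_nf
  rw [this]; exact h.const_mul _

lemma hasDerivAt_phi (z : ℝ) : HasDerivAt phi (-z * phi z) z := by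
  unfold phi
  have h1 : HasDerivAt (fun z : ℝ => -z ^ 2 / 2) (-z) z := by
    have := ((hasDerivAt_pow 2 z).neg).div_const 2
    simpa using this.congr_deriv (by ring)
  have h2 := (h1.exp).const_mul (Real.sqrt (2 * Real.pi))⁻¹
  exact h2.congr_deriv (by ring)

lemma Phi_pos (z : ℝ) : 0 < Phi z := by
  unfold Phi
  rw [setIntegral_pos_iff_support_of_nonneg_ae]
  · have : Function.support phi = Set.univ := by
      ext t; simp [Function.mem_support, (phi_pos t).ne']
    rw [this, Set.univ_inter]
    simp [Real.volume_Iic]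
  · filter_upwards with t using (phi_pos t).le
  · exact phi_integrable.integrableOn

lemma hasDerivAt_Phi (z : ℝ) : HasDerivAt Phi (phi z) z := by
  have key : Phi = fun u => (∫ t in (0:ℝ)..u, phi t) + Phi 0 := by
    funext u
    have := intervalIntegral.integral_Iic_sub_Iic (phi_integrable.integrableOn (s := Set.Iic 0))
      (phi_integrable.integrableOn (s := Set.Iic u))
    unfold Phi
    linarith [this]
  rw [key]
  have h : HasDerivAt (fun u => ∫ t in (0:ℝ)..u, phi t) (phi z) z :=
    intervalIntegral.integral_hasDerivAt_right
      (phi_integrable.intervalIntegrable)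
      (phi_cont.stronglyMeasurableAtFilter _ _) (phi_cont.continuousAt)
  exact h.add_const _

lemma tendsto_Phi_atBot : Tendsto Phi atBot (nhds 0) := by
  have hub : ∀ z : ℝ, z ≤ -2 → Phi z ≤ (Real.sqrt (2 * Real.pi))⁻¹ * Real.exp z := by
    intro z hz
    have hle : ∀ t ∈ Set.Iic z, phi t ≤ (Real.sqrt (2 * Real.pi))⁻¹ * Real.exp t := by
      intro t ht
      simp only [Set.mem_Iic] at ht
      have ht2 : t ≤ -2 := le_trans ht hz
      unfold phi
      have : -t ^ 2 / 2 ≤ t := by nlinarith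
      have := Real.exp_le_exp.mpr this
      have hc : (0:ℝ) < (Real.sqrt (2 * Real.pi))⁻¹ := by positivity
      nlinarith [Real.exp_pos (-t^2/2)]
    calc Phi z ≤ ∫ t in Set.Iic z, (Real.sqrt (2 * Real.pi))⁻¹ * Real.exp t := by
          apply setIntegral_mono_on phi_integrable.integrableOn
            (((integrableOn_exp_Iic z).const_mul _)) measurableSet_Iic hle
      _ = (Real.sqrt (2 * Real.pi))⁻¹ * Real.exp z := by
          rw [integral_const_mul, integral_exp_Iic]
  have h0 : Tendsto (fun z : ℝ => (Real.sqrt (2 * Real.pi))⁻¹ * Real.exp z) atBot (nhds 0) := by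
    simpa using (Real.tendsto_exp_atBot).const_mul (Real.sqrt (2 * Real.pi))⁻¹
  apply squeeze_zero' (f := Phi)
  · filter_upwards with z using (Phi_pos z).le
  · filter_upwards [eventually_le_atBot (-2 : ℝ)] with z hz using hub z hz
  · exact h0

noncomputable def Hf (z : ℝ) : ℝ := phi z * (Real.sqrt (z ^ 2 + 2) + z) - Phi z

lemma sqrt_lb (z : ℝ) : -z ≤ Real.sqrt (z ^ 2 + 2) ∧ z ≤ Real.sqrt (z ^ 2 + 2) := by
  constructor
  · nlinarith [Real.sq_sqrt (show (0:ℝ) ≤ z^2+2 by positivity), Real.sqrt_nonneg (z^2+2)]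
  · nlinarith [Real.sq_sqrt (show (0:ℝ) ≤ z^2+2 by positivity), Real.sqrt_nonneg (z^2+2)]

lemma sqrt_pos' (z : ℝ) : 0 < Real.sqrt (z ^ 2 + 2) := Real.sqrt_pos.mpr (by positivity)

lemma num_pos (z : ℝ) : 0 < z ^ 2 + 1 + z * Real.sqrt (z ^ 2 + 2) := by
  have hsq : (Real.sqrt (z ^ 2 + 2)) ^ 2 = z ^ 2 + 2 := Real.sq_sqrt (by positivity)
  have hprod : (z ^ 2 + 1 + z * Real.sqrt (z ^ 2 + 2)) * (z ^ 2 + 1 - z * Real.sqrt (z ^ 2 + 2)) = 1 := by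
    nlinarith [hsq]
  nlinarith [hprod, sq_nonneg z]

lemma hasDerivAt_Hf (z : ℝ) :
    HasDerivAt Hf (phi z * (-z) * ((z ^ 2 + 1 + z * Real.sqrt (z ^ 2 + 2)) / Real.sqrt (z ^ 2 + 2))) z := by
  set s := Real.sqrt (z ^ 2 + 2) with hs
  have hs0 : s ≠ 0 := (sqrt_pos' z).ne'
  have hsq : s ^ 2 = z ^ 2 + 2 := Real.sq_sqrt (by positivity)
  have h1 : HasDerivAt (fun z : ℝ => z ^ 2 + 2) (2 * z) z := by
    simpa using (hasDerivAt_pow 2 z).add_const 2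
  have h2 : HasDerivAt (fun z : ℝ => Real.sqrt (z ^ 2 + 2)) (z / s) z := by
    have := (Real.hasDerivAt_sqrt (show z ^ 2 + 2 ≠ 0 by positivity)).comp z h1
    refine this.congr_deriv ?_
    field_simp
    ring
  have h3 : HasDerivAt (fun z : ℝ => Real.sqrt (z ^ 2 + 2) + z) (z / s + 1) z := h2.add (hasDerivAt_id z)
  have h4 := (hasDerivAt_phi z).mul h3
  have h5 := h4.sub (hasDerivAt_Phi z)
  unfold Hf
  refine h5.congr_deriv ?_
  symm
  rw [← hs]
  field_simp
  linear_combination (phi z * z) * hsq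

lemma tendsto_Hf_atBot : Tendsto Hf atBot (nhds 0) := by
  have hterm : Tendsto (fun z => phi z * (Real.sqrt (z ^ 2 + 2) + z)) atBot (nhds 0) := by
    apply squeeze_zero'
    · filter_upwards with z
      exact mul_nonneg (phi_pos z).le (by linarith [(sqrt_lb z).1])
    · filter_upwards [eventually_lt_atBot (0 : ℝ)] with z hz
      have h1 : Real.sqrt (z ^ 2 + 2) + z ≤ -z⁻¹ := by
        have h4 : 0 < -z := by linarith
        have h6 : Real.sqrt (z ^ 2 + 2) + z ≤ 1 / (-z) := by
          rw [le_div_iff₀ h4]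
          nlinarith [num_pos z]
        have h7 : (1 : ℝ) / (-z) = -z⁻¹ := by rw [one_div, inv_neg]
        linarith [h6, h7.le]
      have hphile : phi z ≤ (Real.sqrt (2 * Real.pi))⁻¹ := by
        unfold phi
        have : Real.exp (-z ^ 2 / 2) ≤ 1 := Real.exp_le_one_iff.mpr (by nlinarith)
        have hc : (0:ℝ) < (Real.sqrt (2 * Real.pi))⁻¹ := by
          have := Real.pi_pos; positivity
        nlinarith
      exact mul_le_mul hphile h1 (by linarith [(sqrt_lb z).1]) (by positivity)
    · have h : Tendsto (fun z : ℝ => -z⁻¹) atBot (nhds 0) := by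
        have := tendsto_inv_atTop_zero.comp (tendsto_neg_atBot_atTop : Tendsto (fun z : ℝ => -z) atBot atTop)
        have h2 : ((fun r : ℝ => r⁻¹) ∘ Neg.neg) = fun z : ℝ => -z⁻¹ := by
          funext z; simp [Function.comp, inv_neg]
        rwa [h2] at this
      simpa using h.const_mul (Real.sqrt (2 * Real.pi))⁻¹
  have := hterm.sub tendsto_Phi_atBot
  show Tendsto (fun z => phi z * (Real.sqrt (z ^ 2 + 2) + z) - Phi z) atBot (nhds 0)
  simpa using this

lemma Hf_nonneg {z : ℝ} (hz : z ≤ 0) : 0 ≤ Hf z := by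
  have hmono : MonotoneOn Hf (Set.Iic 0) := by
    apply monotoneOn_of_deriv_nonneg (convex_Iic 0)
    · exact fun t _ => ((hasDerivAt_Hf t).differentiableAt.continuousAt.continuousWithinAt)
    · intro t _
      exact (hasDerivAt_Hf t).differentiableAt.differentiableWithinAt
    · intro t ht
      rw [interior_Iic] at ht
      rw [(hasDerivAt_Hf t).deriv]
      have ht0 : t < 0 := ht
      have h1 := phi_pos t
      have h2 := sqrt_pos' t
      have h3 := num_pos t
      have h0 : (0:ℝ) < -t := by linarith
      exact mul_nonneg (mul_nonneg h1.le h0.le) (div_nonneg h3.le h2.le)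
  have : ∀ᶠ t in atBot, Hf t ≤ Hf z := by
    filter_upwards [eventually_le_atBot z] with t ht
    exact hmono (Set.mem_Iic.mpr (le_trans ht hz)) (Set.mem_Iic.mpr hz) ht
  exact le_of_tendsto tendsto_Hf_atBot this

lemma psi_ge_half {z : ℝ} (hz : z ≤ 0) : 1 / 2 ≤ psi z := by
  set s := Real.sqrt (z ^ 2 + 2) with hs
  have hsq : s ^ 2 = z ^ 2 + 2 := Real.sq_sqrt (by positivity)
  have hsz : -z < s := by nlinarith [Real.sqrt_nonneg (z ^ 2 + 2)]
  have hszpos : 0 < s + z := by linarith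
  have hPhi := Phi_pos z
  have hphi := phi_pos z
  have hH := Hf_nonneg hz
  unfold Hf at hH
  rw [← hs] at hH
  have hPhile : Phi z ≤ phi z * (s + z) := by linarith
  set r := phi z / Phi z with hr
  have hra : (s - z) / 2 ≤ r := by
    rw [hr, le_div_iff₀ hPhi]
    nlinarith [hPhile]
  have hrb : (s + z) / 2 ≤ z + r := by linarith
  have ha : (0:ℝ) < (s - z) / 2 := by linarith
  have hb : (0:ℝ) < (s + z) / 2 := by linarith
  have : (s - z) / 2 * ((s + z) / 2) ≤ r * (z + r) :=
    mul_le_mul hra hrb hb.le (by linarith)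
  have heq : (s - z) / 2 * ((s + z) / 2) = 1 / 2 := by nlinarith [hsq]
  unfold psi
  rw [← hr]
  linarith

lemma psi_nonneg (z : ℝ) : 0 ≤ psi z := by
  rcases le_or_gt z 0 with hz | hz
  · linarith [psi_ge_half hz]
  · have hphi := phi_pos z
    have hPhi := Phi_pos z
    have hr : 0 < phi z / Phi z := div_pos hphi hPhi
    unfold psi
    positivity

lemma quad_pos {n d : ℕ} (x : Fin n → EuclideanSpace ℝ (Fin (d + 1)))
    (S : Finset (Fin n)) (hS : Submodule.span ℝ (x '' ↑S) = ⊤) :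
    ∃ ε > (0:ℝ), ∀ v : EuclideanSpace ℝ (Fin (d + 1)), ‖v‖ = 1 →
      ε ≤ ∑ i ∈ S, (inner ℝ (x i) v : ℝ) ^ 2 := by
  have hfc : Continuous (fun v : EuclideanSpace ℝ (Fin (d + 1)) => ∑ i ∈ S, (inner ℝ (x i) v : ℝ) ^ 2) := by
    apply continuous_finset_sum
    intro i _
    exact (Continuous.inner continuous_const continuous_id).pow 2
  have hcompact : IsCompact (Metric.sphere (0 : EuclideanSpace ℝ (Fin (d + 1))) 1) := isCompact_sphere 0 1
  have hne : (Metric.sphere (0 : EuclideanSpace ℝ (Fin (d + 1))) 1).Nonempty :=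
    NormedSpace.sphere_nonempty.mpr zero_le_one
  obtain ⟨v0, hv0mem, hmin'⟩ := hcompact.exists_isMinOn hne hfc.continuousOn
  have hv0 : ‖v0‖ = 1 := by simpa using mem_sphere_zero_iff_norm.mp hv0mem
  refine ⟨∑ i ∈ S, (inner ℝ (x i) v0 : ℝ) ^ 2, ?_, ?_⟩
  · rcases lt_or_eq_of_le (Finset.sum_nonneg (fun i (_ : i ∈ S) => sq_nonneg ((inner ℝ (x i) v0 : ℝ)))) with h | h
    · exact h
    · exfalso
      have hzero : ∀ i ∈ S, (inner ℝ (x i) v0 : ℝ) ^ 2 = 0 :=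
        (Finset.sum_eq_zero_iff_of_nonneg (fun i _ => sq_nonneg _)).mp h.symm
      have hsub : x '' ↑S ⊆ ↑((ℝ ∙ v0)ᗮ : Submodule ℝ (EuclideanSpace ℝ (Fin (d + 1)))) := by
        rintro w ⟨i, hi, rfl⟩
        rw [SetLike.mem_coe, Submodule.mem_orthogonal_singleton_iff_inner_left]
        exact pow_eq_zero_iff (n := 2) (by norm_num) |>.mp (hzero i hi)
      have hle : Submodule.span ℝ (x '' ↑S) ≤ (ℝ ∙ v0)ᗮ := Submodule.span_le.mpr hsub
      rw [hS] at hle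
      have h1 : v0 ∈ (ℝ ∙ v0)ᗮ := hle Submodule.mem_top
      have h2 : (inner ℝ v0 v0 : ℝ) = 0 :=
        Submodule.mem_orthogonal_singleton_iff_inner_right.mp h1
      have h3 : v0 = 0 := by rwa [inner_self_eq_zero] at h2
      rw [h3] at hv0
      simp at hv0
  · intro v hv
    exact hmin' (mem_sphere_zero_iff_norm.mpr hv)

theorem stmt12 {n d : ℕ} (y : Fin n → ℝ) (hy : ∀ i, y i = 1 ∨ y i = -1)
    (x : Fin n → EuclideanSpace ℝ (Fin (d + 1)))
    (hspan : ∀ u : EuclideanSpace ℝ (Fin (d + 1)), ‖u‖ = 1 →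
      Submodule.span ℝ (x '' {i | y i * (inner ℝ (x i) u : ℝ) ≤ 0}) = ⊤) :
    ∃ m > (0 : ℝ), ∀ θ v : EuclideanSpace ℝ (Fin (d + 1)), ‖v‖ = 1 →
      m ≤ ∑ i, psi (y i * (inner ℝ (x i) θ : ℝ)) * (inner ℝ (x i) v : ℝ) ^ 2 := by
  classical
  -- a unit vector exists
  have hu0 : ‖(EuclideanSpace.single (0 : Fin (d+1)) (1:ℝ) : EuclideanSpace ℝ (Fin (d+1)))‖ = 1 := by
    rw [EuclideanSpace.norm_single]; norm_num
  -- the full index set spans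
  have huniv : Submodule.span ℝ (x '' ↑(Finset.univ : Finset (Fin n))) = ⊤ := by
    rw [Finset.coe_univ, Set.image_univ, eq_top_iff, ← hspan _ hu0]
    exact Submodule.span_mono (Set.image_subset_range x _)
  -- choice of positive lower bounds for each spanning subset
  have hchoice : ∀ S : Finset (Fin n), ∃ ε : ℝ, 0 < ε ∧
      (Submodule.span ℝ (x '' ↑S) = ⊤ → ∀ v : EuclideanSpace ℝ (Fin (d+1)), ‖v‖ = 1 →
        ε ≤ ∑ i ∈ S, (inner ℝ (x i) v : ℝ) ^ 2) := by
    intro S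
    by_cases h : Submodule.span ℝ (x '' ↑S) = ⊤
    · obtain ⟨ε, hε, hb⟩ := quad_pos x S h
      exact ⟨ε, hε, fun _ => hb⟩
    · exact ⟨1, one_pos, fun h' => absurd h' h⟩
  choose g hgpos hgle using hchoice
  set G : Finset (Finset (Fin n)) :=
    Finset.univ.filter (fun S => Submodule.span ℝ (x '' ↑S) = ⊤) with hG
  have hGne : G.Nonempty :=
    ⟨Finset.univ, by rw [hG, Finset.mem_filter]; exact ⟨Finset.mem_univ _, huniv⟩⟩
  refine ⟨1/2 * G.inf' hGne g, ?_, ?_⟩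
  · have : 0 < G.inf' hGne g := by
      rw [Finset.lt_inf'_iff]
      exact fun S _ => hgpos S
    linarith
  · intro θ v hv
    set S : Finset (Fin n) := Finset.univ.filter (fun i => y i * (inner ℝ (x i) θ : ℝ) ≤ 0) with hSdef
    have hSspan : Submodule.span ℝ (x '' ↑S) = ⊤ := by
      by_cases hθ : θ = 0
      · have : S = Finset.univ := by
          apply Finset.eq_univ_of_forall
          intro i
          simp [hSdef, hθ, inner_zero_right]
        rw [this]; exact huniv
      · set u : EuclideanSpace ℝ (Fin (d+1)) := ‖θ‖⁻¹ • θ with hu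
        have hunorm : ‖u‖ = 1 := norm_smul_inv_norm hθ
        have hset : {i | y i * (inner ℝ (x i) u : ℝ) ≤ 0} = ↑S := by
          ext i
          have hc : (0:ℝ) < ‖θ‖⁻¹ := by
            have : (0:ℝ) < ‖θ‖ := norm_pos_iff.mpr hθ
            positivity
          have hinner : (inner ℝ (x i) u : ℝ) = ‖θ‖⁻¹ * (inner ℝ (x i) θ : ℝ) := by
            rw [hu, real_inner_smul_right]
          simp only [Set.mem_setOf_eq, hSdef, Finset.coe_filter, Finset.mem_univ, true_and]
          rw [hinner]
          constructor
          · intro h; nlinarith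
          · intro h; nlinarith
        have hsp := hspan u hunorm
        rwa [hset] at hsp
    have hSG : S ∈ G := by simp [hG, hSspan]
    calc 1/2 * G.inf' hGne g ≤ 1/2 * g S := by
          have := Finset.inf'_le g hSG
          linarith
      _ ≤ 1/2 * ∑ i ∈ S, (inner ℝ (x i) v : ℝ) ^ 2 := by
          have := hgle S hSspan v hv
          linarith
      _ = ∑ i ∈ S, 1/2 * (inner ℝ (x i) v : ℝ) ^ 2 := by rw [Finset.mul_sum]
      _ ≤ ∑ i ∈ S, psi (y i * (inner ℝ (x i) θ : ℝ)) * (inner ℝ (x i) v : ℝ) ^ 2 := by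
          apply Finset.sum_le_sum
          intro i hi
          have hle : y i * (inner ℝ (x i) θ : ℝ) ≤ 0 := by
            simp only [hSdef, Finset.mem_filter] at hi
            exact hi.2
          exact mul_le_mul_of_nonneg_right (psi_ge_half hle) (sq_nonneg _)
      _ ≤ ∑ i, psi (y i * (inner ℝ (x i) θ : ℝ)) * (inner ℝ (x i) v : ℝ) ^ 2 := by
          apply Finset.sum_le_sum_of_subset_of_nonneg (Finset.subset_univ S)
          intro i _ _
          exact mul_nonneg (psi_nonneg _) (sq_nonneg _)
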